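/- arXiv:1308.5541 — 2 statements merged into one kernel-verified Lean document; each statement's English description precedes it below -/
import Mathlib

section
/- For every integer n₀ ≥ 3 and every integer n ≥ n₀, sup_{x ≥ 0} |Φⁿ(x/b_n + b_n) − Λ(x)| < C̄⁺(n₀)/log n, where C̄⁺(n₀) = ((√2 + 1)/e^{√2})·(log n₀)/b_{n₀}² + (log n₀)/(2(n₀ − 1)). -/
/-!
Let `H = -log (1 - Φ)` be the cumulative hazard of the standard normal law, so that `H bₙ = log n`.
Mills' inequalities `x (1 - Φ x) ≤ φ x ≤ (x + 1 / x) (1 - Φ x)` say `x ≤ H' x ≤ x + 1 / x`;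
integrating from `bₙ` to `x / bₙ + bₙ` shows that `s = n (1 - Φ (x / bₙ + bₙ))` lies below `e⁻ˣ`
by at most `e⁻ˣ (x² + 2x) / (2 bₙ²) ≤ ((√2 + 1) / e^√2) / bₙ²`. Since `Φⁿ = (1 - s / n)ⁿ`, it
remains to compare both `Φⁿ` and `Λ x = exp (-e⁻ˣ)` with `e⁻ˢ`: the first gap is at most
`1 / (e (n - 1))`, the second at most `e⁻ˣ - s`. The two error terms are brought to the form
`C̄⁺(n₀) / log n` by monotonicity of `b² / H b` (its derivative has the sign of `2 H - b H'`,
and `2 H b ≥ 1 + b² ≥ b H' b`) and of `(s - 1) / log s`.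
-/

open Real

noncomputable def stdNormalCDF (x : ℝ) : ℝ :=
  (Real.sqrt (2 * Real.pi))⁻¹ * ∫ t in Set.Iic x, Real.exp (-t ^ 2 / 2)

noncomputable def gumbelCDF (x : ℝ) : ℝ := Real.exp (-Real.exp (-x))

open MeasureTheory Set Filter Topology

noncomputable def stdNormalPDF (x : ℝ) : ℝ := (√(2 * π))⁻¹ * exp (-x ^ 2 / 2)

lemma stdNormalPDF_pos (x : ℝ) : 0 < stdNormalPDF x := by
  unfold stdNormalPDF; positivity

lemma continuous_stdNormalPDF : Continuous stdNormalPDF := by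
  unfold stdNormalPDF; fun_prop

lemma stdNormalPDF_eq (x : ℝ) : stdNormalPDF x = (√(2 * π))⁻¹ * exp (-(1 / 2) * x ^ 2) := by
  rw [stdNormalPDF]; ring_nf

lemma integrable_stdNormalPDF : Integrable stdNormalPDF := by
  rw [funext stdNormalPDF_eq]
  exact (integrable_exp_neg_mul_sq (by norm_num)).const_mul _

lemma integral_stdNormalPDF : ∫ x, stdNormalPDF x = 1 := by
  simp only [stdNormalPDF_eq, integral_const_mul, integral_gaussian]
  rw [div_div_eq_mul_div, div_one, mul_comm π, inv_mul_cancel₀ (by positivity)]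

lemma stdNormalCDF_eq_setIntegral (x : ℝ) :
    stdNormalCDF x = ∫ t in Iic x, stdNormalPDF t := by
  rw [stdNormalCDF, ← integral_const_mul]; rfl

lemma one_sub_stdNormalCDF_eq_setIntegral (x : ℝ) :
    1 - stdNormalCDF x = ∫ t in Ioi x, stdNormalPDF t := by
  rw [← integral_stdNormalPDF, ← integral_add_compl measurableSet_Iic integrable_stdNormalPDF,
    compl_Iic, stdNormalCDF_eq_setIntegral]
  ring

lemma one_sub_stdNormalCDF_pos (x : ℝ) : 0 < 1 - stdNormalCDF x := by
  rw [one_sub_stdNormalCDF_eq_setIntegral, setIntegral_pos_iff_support_of_nonneg_ae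
    (ae_of_all _ fun t ↦ (stdNormalPDF_pos t).le) integrable_stdNormalPDF.integrableOn]
  simp [Function.support_eq_univ fun t ↦ (stdNormalPDF_pos t).ne']

lemma hasDerivAt_stdNormalCDF (x : ℝ) : HasDerivAt stdNormalCDF (stdNormalPDF x) x := by
  have hF : ∀ y, stdNormalCDF y =
      (∫ t in Iic 0, stdNormalPDF t) + ∫ t in (0 : ℝ)..y, stdNormalPDF t := fun y ↦ by
    rw [← intervalIntegral.integral_Iic_sub_Iic integrable_stdNormalPDF.integrableOn
      integrable_stdNormalPDF.integrableOn, stdNormalCDF_eq_setIntegral]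
    ring
  rw [funext hF]
  exact (intervalIntegral.integral_hasDerivAt_right integrable_stdNormalPDF.intervalIntegrable
    (continuous_stdNormalPDF.stronglyMeasurableAtFilter _ _)
    continuous_stdNormalPDF.continuousAt).const_add _

lemma stdNormalCDF_strictMono : StrictMono stdNormalCDF :=
  strictMono_of_deriv_pos fun x ↦ (hasDerivAt_stdNormalCDF x).deriv ▸ stdNormalPDF_pos x

lemma stdNormalCDF_zero : stdNormalCDF 0 = 1 / 2 := by
  have h : ∫ t in Ioi (0 : ℝ), stdNormalPDF t = 1 / 2 := by
    simp only [stdNormalPDF_eq, integral_const_mul, integral_gaussian_Ioi]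
    rw [div_div_eq_mul_div, div_one, mul_comm π, ← mul_div_assoc, inv_mul_cancel₀ (by positivity)]
  linarith [one_sub_stdNormalCDF_eq_setIntegral 0]

lemma hasDerivAt_stdNormalPDF (x : ℝ) : HasDerivAt stdNormalPDF (-x * stdNormalPDF x) x := by
  have h : HasDerivAt (fun t : ℝ ↦ -t ^ 2 / 2) (-x) x :=
    ((hasDerivAt_pow 2 x).neg.div_const 2).congr_deriv (by ring)
  exact (h.exp.const_mul (√(2 * π))⁻¹).congr_deriv (by simp only [stdNormalPDF]; ring)

lemma tendsto_stdNormalPDF_atTop : Tendsto stdNormalPDF atTop (𝓝 0) := by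
  have h : Tendsto (fun x : ℝ ↦ -x ^ 2 / 2) atTop atBot :=
    (tendsto_neg_atTop_atBot.comp (tendsto_pow_atTop two_ne_zero)).atBot_div_const two_pos
  have := (tendsto_exp_atBot.comp h).const_mul (√(2 * π))⁻¹
  rwa [mul_zero] at this

lemma mul_one_sub_stdNormalCDF_le_stdNormalPDF (x : ℝ) :
    x * (1 - stdNormalCDF x) ≤ stdNormalPDF x := by
  rcases le_or_gt x 0 with hx | hx
  · nlinarith [one_sub_stdNormalCDF_pos x, stdNormalPDF_pos x]
  have hderiv : ∀ s ∈ Ici x, HasDerivAt (fun t ↦ -stdNormalPDF t) (s * stdNormalPDF s) s :=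
    fun s _ ↦ (hasDerivAt_stdNormalPDF s).neg.congr_deriv (by ring)
  have hnonneg : ∀ s ∈ Ioi x, 0 ≤ s * stdNormalPDF s :=
    fun s hs ↦ mul_nonneg (hx.trans hs).le (stdNormalPDF_pos s).le
  have hlim : Tendsto (fun t ↦ -stdNormalPDF t) atTop (𝓝 0) := by
    simpa using tendsto_stdNormalPDF_atTop.neg
  calc x * (1 - stdNormalCDF x) = ∫ s in Ioi x, x * stdNormalPDF s := by
        rw [one_sub_stdNormalCDF_eq_setIntegral, integral_const_mul]
    _ ≤ ∫ s in Ioi x, s * stdNormalPDF s :=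
        setIntegral_mono_on (integrable_stdNormalPDF.integrableOn.const_mul x)
          (integrableOn_Ioi_deriv_of_nonneg' hderiv hnonneg hlim) measurableSet_Ioi
          fun s hs ↦ mul_le_mul_of_nonneg_right (le_of_lt hs) (stdNormalPDF_pos s).le
    _ = stdNormalPDF x := by
        rw [integral_Ioi_of_hasDerivAt_of_nonneg' hderiv hnonneg hlim]; ring

lemma mul_stdNormalPDF_le_one_add_sq_mul {x : ℝ} (hx : 0 ≤ x) :
    x * stdNormalPDF x ≤ (1 + x ^ 2) * (1 - stdNormalCDF x) := by
  rcases hx.eq_or_lt with rfl | hx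
  · simpa using (one_sub_stdNormalCDF_pos 0).le
  have hderiv : ∀ s ∈ Ici x, HasDerivAt (fun t ↦ -(stdNormalPDF t / t))
      ((1 + (s ^ 2)⁻¹) * stdNormalPDF s) s := fun s hs ↦ by
    have hs : s ≠ 0 := (hx.trans_le hs).ne'
    exact ((hasDerivAt_stdNormalPDF s).div (hasDerivAt_id s) hs).neg.congr_deriv
      (by simp only [id]; field_simp; ring)
  have hnonneg : ∀ s ∈ Ioi x, 0 ≤ (1 + (s ^ 2)⁻¹) * stdNormalPDF s :=
    fun s _ ↦ by have := stdNormalPDF_pos s; positivity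
  have hlim : Tendsto (fun t ↦ -(stdNormalPDF t / t)) atTop (𝓝 0) := by
    simpa using (tendsto_stdNormalPDF_atTop.div_atTop tendsto_id).neg
  have key : stdNormalPDF x / x ≤ (1 + (x ^ 2)⁻¹) * (1 - stdNormalCDF x) :=
    calc stdNormalPDF x / x = ∫ s in Ioi x, (1 + (s ^ 2)⁻¹) * stdNormalPDF s := by
          rw [integral_Ioi_of_hasDerivAt_of_nonneg' hderiv hnonneg hlim]; ring
      _ ≤ ∫ s in Ioi x, (1 + (x ^ 2)⁻¹) * stdNormalPDF s :=
          setIntegral_mono_on (integrableOn_Ioi_deriv_of_nonneg' hderiv hnonneg hlim)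
            (integrable_stdNormalPDF.integrableOn.const_mul _) measurableSet_Ioi
            fun s hs ↦ by have := stdNormalPDF_pos s; gcongr; exact le_of_lt hs
      _ = (1 + (x ^ 2)⁻¹) * (1 - stdNormalCDF x) := by
          rw [one_sub_stdNormalCDF_eq_setIntegral, integral_const_mul]
  rw [div_le_iff₀ hx] at key
  calc x * stdNormalPDF x ≤ x * ((1 + (x ^ 2)⁻¹) * (1 - stdNormalCDF x) * x) := by gcongr
    _ = (1 + x ^ 2) * (1 - stdNormalCDF x) := by field_simp; ring

noncomputable def stdNormalCumHazard (x : ℝ) : ℝ := -log (1 - stdNormalCDF x)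

lemma exp_neg_stdNormalCumHazard (x : ℝ) : exp (-stdNormalCumHazard x) = 1 - stdNormalCDF x := by
  rw [stdNormalCumHazard, neg_neg, exp_log (one_sub_stdNormalCDF_pos x)]

lemma stdNormalCumHazard_of_stdNormalCDF_eq {b m : ℝ} (hb : stdNormalCDF b = 1 - 1 / m) :
    stdNormalCumHazard b = log m := by
  rw [stdNormalCumHazard, hb, sub_sub_cancel, one_div, log_inv, neg_neg]

lemma hasDerivAt_stdNormalCumHazard (x : ℝ) :
    HasDerivAt stdNormalCumHazard (stdNormalPDF x / (1 - stdNormalCDF x)) x := by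
  have := ((hasDerivAt_stdNormalCDF x).const_sub 1).log (one_sub_stdNormalCDF_pos x).ne'
  exact this.neg.congr_deriv (by ring)

lemma monotone_stdNormalCumHazard_sub_sq :
    Monotone fun x ↦ stdNormalCumHazard x - x ^ 2 / 2 := by
  have hderiv : ∀ x, HasDerivAt (fun x ↦ stdNormalCumHazard x - x ^ 2 / 2)
      (stdNormalPDF x / (1 - stdNormalCDF x) - x) x := fun x ↦
    ((hasDerivAt_stdNormalCumHazard x).sub ((hasDerivAt_pow 2 x).div_const 2)).congr_deriv
      (by ring)
  refine monotone_of_deriv_nonneg (fun x ↦ (hderiv x).differentiableAt) fun x ↦ ?_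
  rw [(hderiv x).deriv, sub_nonneg, le_div_iff₀ (one_sub_stdNormalCDF_pos x)]
  exact mul_one_sub_stdNormalCDF_le_stdNormalPDF x

lemma antitoneOn_stdNormalCumHazard_sub_sq_sub_log :
    AntitoneOn (fun x ↦ stdNormalCumHazard x - x ^ 2 / 2 - log x) (Ioi 0) := by
  have hderiv : ∀ x ∈ Ioi (0 : ℝ), HasDerivAt (fun x ↦ stdNormalCumHazard x - x ^ 2 / 2 - log x)
      (stdNormalPDF x / (1 - stdNormalCDF x) - x - x⁻¹) x := fun x hx ↦
    (((hasDerivAt_stdNormalCumHazard x).sub ((hasDerivAt_pow 2 x).div_const 2)).sub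
      (hasDerivAt_log (ne_of_gt hx))).congr_deriv (by ring)
  refine antitoneOn_of_deriv_nonpos (convex_Ioi 0)
    (fun x hx ↦ (hderiv x hx).continuousAt.continuousWithinAt)
    (fun x hx ↦ (hderiv x (interior_subset hx)).differentiableAt.differentiableWithinAt)
    fun x hx ↦ ?_
  rw [interior_Ioi, mem_Ioi] at hx
  have hu := one_sub_stdNormalCDF_pos x
  rw [(hderiv x hx).deriv, sub_sub, sub_nonpos, div_le_iff₀ hu]
  have := mul_stdNormalPDF_le_one_add_sq_mul (le_of_lt hx)
  calc stdNormalPDF x = x⁻¹ * (x * stdNormalPDF x) := by field_simp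
    _ ≤ x⁻¹ * ((1 + x ^ 2) * (1 - stdNormalCDF x)) := by gcongr
    _ = (x + x⁻¹) * (1 - stdNormalCDF x) := by field_simp; ring

lemma one_add_sq_le_two_mul_stdNormalCumHazard {x : ℝ} (hx : 0 ≤ x) :
    1 + x ^ 2 ≤ 2 * stdNormalCumHazard x := by
  have hmono : stdNormalCumHazard 0 - 0 ^ 2 / 2 ≤ stdNormalCumHazard x - x ^ 2 / 2 :=
    monotone_stdNormalCumHazard_sub_sq hx
  have h0 : stdNormalCumHazard 0 = log 2 :=
    stdNormalCumHazard_of_stdNormalCDF_eq (by rw [stdNormalCDF_zero]; norm_num)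
  linarith [log_two_gt_d9]

lemma monotoneOn_sq_div_stdNormalCumHazard :
    MonotoneOn (fun x ↦ x ^ 2 / stdNormalCumHazard x) (Ici 0) := by
  have hpos : ∀ x ∈ Ici (0 : ℝ), 0 < stdNormalCumHazard x := fun x hx ↦ by
    linarith [one_add_sq_le_two_mul_stdNormalCumHazard hx, sq_nonneg x]
  have hderiv : ∀ x ∈ Ici (0 : ℝ), HasDerivAt (fun x ↦ x ^ 2 / stdNormalCumHazard x)
      ((2 * x * stdNormalCumHazard x - x ^ 2 * (stdNormalPDF x / (1 - stdNormalCDF x)))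
        / stdNormalCumHazard x ^ 2) x := fun x hx ↦
    ((hasDerivAt_pow 2 x).div (hasDerivAt_stdNormalCumHazard x) (hpos x hx).ne').congr_deriv
      (by push_cast; ring)
  refine monotoneOn_of_deriv_nonneg (convex_Ici 0)
    (fun x hx ↦ (hderiv x hx).continuousAt.continuousWithinAt)
    (fun x hx ↦ (hderiv x (interior_subset hx)).differentiableAt.differentiableWithinAt)
    fun x hx ↦ ?_
  rw [interior_Ici, mem_Ioi] at hx
  rw [(hderiv x (le_of_lt hx)).deriv]
  refine div_nonneg ?_ (sq_nonneg _)
  have hu := one_sub_stdNormalCDF_pos x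
  have hmills : x * (stdNormalPDF x / (1 - stdNormalCDF x)) ≤ 1 + x ^ 2 := by
    rw [← mul_div_assoc, div_le_iff₀ hu]; exact mul_stdNormalPDF_le_one_add_sq_mul (le_of_lt hx)
  nlinarith [one_add_sq_le_two_mul_stdNormalCumHazard (le_of_lt hx)]

lemma stdNormalCumHazard_div_add_sub_bounds {b x : ℝ} (hb : 0 < b) (hx : 0 ≤ x) :
    x ≤ stdNormalCumHazard (x / b + b) - stdNormalCumHazard b ∧
      stdNormalCumHazard (x / b + b) - stdNormalCumHazard b
        ≤ x + (x ^ 2 + 2 * x) / (2 * b ^ 2) := by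
  have hle : b ≤ x / b + b := le_add_of_nonneg_left (by positivity)
  have hsq : (x / b + b) ^ 2 / 2 - b ^ 2 / 2 = x + x ^ 2 / (2 * b ^ 2) := by field_simp; ring
  have hlog : log (x / b + b) - log b ≤ x / b ^ 2 := by
    rw [← log_div (by positivity) hb.ne']
    calc log ((x / b + b) / b) ≤ (x / b + b) / b - 1 := log_le_sub_one_of_pos (by positivity)
      _ = x / b ^ 2 := by field_simp; ring
  have h₁ := monotone_stdNormalCumHazard_sub_sq hle
  have h₂ := antitoneOn_stdNormalCumHazard_sub_sq_sub_log hb (hb.trans_le hle) hle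
  simp only at h₁ h₂
  constructor
  · have : 0 ≤ x ^ 2 / (2 * b ^ 2) := by positivity
    linarith
  · have : x / b ^ 2 = 2 * x / (2 * b ^ 2) := by field_simp
    rw [add_div, ← add_assoc]
    linarith

lemma exp_neg_sub_one_sub_div_pow_le {n : ℕ} (hn : 2 ≤ n) {s : ℝ} (hs₀ : 0 ≤ s) (hs₁ : s ≤ 1) :
    exp (-s) - (1 - s / n) ^ n ≤ (exp 1 * (n - 1))⁻¹ := by
  have hn₁ : (1 : ℝ) < n := by exact_mod_cast hn
  set u := s / n with hu_def
  have hu₀ : 0 ≤ u := by positivity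
  have hu₁ : u ≤ 1 := (div_le_one (by linarith)).2 (by linarith)
  have hsu : s = n * u := by rw [hu_def]; field_simp
  have hpow : exp (-s) = exp (-u) ^ n := by rw [← exp_nat_mul, hsu, neg_mul_eq_mul_neg]
  have hab : 1 - u ≤ exp (-u) := one_sub_le_exp_neg u
  have hgap : exp (-u) - (1 - u) ≤ u ^ 2 := by
    have := abs_exp_sub_one_sub_id_le (x := -u) (by rw [abs_neg, abs_of_nonneg hu₀]; exact hu₁)
    rw [neg_sq] at this
    linarith [le_abs_self (exp (-u) - 1 - -u)]
  have hdecay : u * exp (-u) ^ (n - 1) ≤ exp (-1) / (n - 1) := by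
    rw [le_div_iff₀ (by linarith), ← exp_nat_mul, Nat.cast_sub (by omega), Nat.cast_one]
    calc u * exp ((n - 1) * -u) * (n - 1) = (n - 1) * u * exp (-((n - 1) * u)) := by
          rw [mul_neg]; ring
      _ ≤ exp (-1) := mul_exp_neg_le_exp_neg_one _
  calc exp (-s) - (1 - u) ^ n = exp (-u) ^ n - (1 - u) ^ n := by rw [hpow]
    _ ≤ |exp (-u) - (1 - u)| * n * max |exp (-u)| |1 - u| ^ (n - 1) :=
        (le_abs_self _).trans (abs_pow_sub_pow_le _ _ _)
    _ = (exp (-u) - (1 - u)) * n * exp (-u) ^ (n - 1) := by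
        rw [abs_of_nonneg (sub_nonneg.2 hab), abs_of_pos (exp_pos _),
          abs_of_nonneg (by linarith), max_eq_left hab]
    _ ≤ u ^ 2 * n * exp (-u) ^ (n - 1) := by gcongr
    _ = s * (u * exp (-u) ^ (n - 1)) := by rw [hsu]; ring
    _ ≤ 1 * (exp (-1) / (n - 1)) := by gcongr
    _ = (exp 1 * (n - 1))⁻¹ := by rw [exp_neg, mul_inv]; ring

lemma exp_neg_sub_exp_neg_le {p q : ℝ} (hp : 0 ≤ p) (hpq : p ≤ q) :
    exp (-p) - exp (-q) ≤ q - p := by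
  have h : exp (-q) = exp (-p) * exp (-(q - p)) := by rw [← exp_add]; ring_nf
  have h₁ : exp (-p) ≤ 1 := exp_le_one_iff.2 (by linarith)
  have h₂ := one_sub_le_exp_neg (q - p)
  nlinarith [exp_pos (-p), exp_le_one_iff.2 (by linarith : -(q - p) ≤ 0)]

lemma monotoneOn_sub_one_div_log : MonotoneOn (fun s ↦ (s - 1) / log s) (Ioi 1) := by
  have hderiv : ∀ s ∈ Ioi (1 : ℝ), HasDerivAt (fun s ↦ (s - 1) / log s)
      ((1 * log s - (s - 1) * s⁻¹) / log s ^ 2) s := fun s hs ↦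
    ((hasDerivAt_id s).sub_const 1).div (hasDerivAt_log (by linarith [mem_Ioi.1 hs]))
      (log_pos hs).ne'
  refine monotoneOn_of_deriv_nonneg (convex_Ioi 1)
    (fun x hx ↦ (hderiv x hx).continuousAt.continuousWithinAt)
    (fun x hx ↦ (hderiv x (interior_subset hx)).differentiableAt.differentiableWithinAt)
    fun s hs ↦ ?_
  rw [interior_Ioi] at hs
  have hs₀ : 0 < s := by linarith [mem_Ioi.1 hs]
  rw [(hderiv s hs).deriv]
  refine div_nonneg ?_ (sq_nonneg _)
  have := one_sub_inv_le_log_of_pos hs₀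
  have : (s - 1) * s⁻¹ = 1 - s⁻¹ := by field_simp
  linarith

lemma sq_add_two_mul_div_two_mul_exp_neg_le {x : ℝ} (hx : 0 ≤ x) :
    (x ^ 2 + 2 * x) / 2 * exp (-x) ≤ (√2 + 1) / exp √2 := by
  set q : ℝ → ℝ := fun y ↦ (y ^ 2 + 2 * y) / 2 * exp (-y)
  have hderiv : ∀ y, HasDerivAt q ((1 - y ^ 2 / 2) * exp (-y)) y := fun y ↦
    ((((hasDerivAt_pow 2 y).add ((hasDerivAt_id y).const_mul 2)).div_const 2).mul
      (hasDerivAt_neg y).exp).congr_deriv (by simp only [id, Pi.add_apply]; push_cast; ring)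
  have hcont : Continuous q := continuous_iff_continuousAt.2 fun y ↦ (hderiv y).continuousAt
  have hs : √2 ^ 2 = 2 := sq_sqrt zero_le_two
  have hmax : q √2 = (√2 + 1) / exp √2 := by
    simp only [q, hs, exp_neg]; field_simp; ring
  rw [← hmax]
  rcases le_total x √2 with h | h
  · refine monotoneOn_of_deriv_nonneg (convex_Icc 0 √2) hcont.continuousOn
      (fun y _ ↦ (hderiv y).differentiableAt.differentiableWithinAt) (fun y hy ↦ ?_)
      ⟨hx, h⟩ ⟨sqrt_nonneg 2, le_rfl⟩ h
    rw [interior_Icc] at hy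
    rw [(hderiv y).deriv]
    have : y ^ 2 ≤ 2 := by nlinarith [hy.1, hy.2]
    have := exp_pos (-y)
    nlinarith
  · refine antitoneOn_of_deriv_nonpos (convex_Ici √2) hcont.continuousOn
      (fun y _ ↦ (hderiv y).differentiableAt.differentiableWithinAt) (fun y hy ↦ ?_)
      self_mem_Ici h h
    rw [interior_Ici, mem_Ioi] at hy
    rw [(hderiv y).deriv]
    have : 2 ≤ y ^ 2 := by nlinarith [sqrt_nonneg 2]
    have := exp_pos (-y)
    nlinarith

lemma pos_of_stdNormalCDF_eq {b m : ℝ} (hm : 2 < m) (hb : stdNormalCDF b = 1 - 1 / m) :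
    0 < b := by
  rw [← stdNormalCDF_strictMono.lt_iff_lt, hb, stdNormalCDF_zero]
  linarith [one_div_lt_one_div_of_lt two_pos hm]

lemma abs_stdNormalCDF_pow_sub_gumbelCDF_le {n : ℕ} (hn : 2 ≤ n) {b : ℝ} (hb : 0 < b)
    (hbn : stdNormalCDF b = 1 - 1 / (n : ℝ)) {x : ℝ} (hx : 0 ≤ x) :
    |stdNormalCDF (x / b + b) ^ n - gumbelCDF x|
      ≤ (exp 1 * (n - 1))⁻¹ + (√2 + 1) / exp √2 / b ^ 2 := by
  have hn₂ : (2 : ℝ) ≤ n := by exact_mod_cast hn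
  obtain ⟨hD₁, hD₂⟩ := stdNormalCumHazard_div_add_sub_bounds hb hx
  set D := stdNormalCumHazard (x / b + b) - stdNormalCumHazard b
  set δ := (x ^ 2 + 2 * x) / (2 * b ^ 2)
  set s := exp (-D)
  have hΦ : stdNormalCDF (x / b + b) = 1 - s / n := by
    have h : 1 - stdNormalCDF (x / b + b) = s / n := by
      rw [← exp_neg_stdNormalCumHazard, show stdNormalCumHazard (x / b + b) = D + log n by
        rw [← stdNormalCumHazard_of_stdNormalCDF_eq hbn]; ring, neg_add, exp_add,
        exp_neg (log n), exp_log (by linarith), div_eq_mul_inv]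
    linarith
  have hs₁ : s ≤ exp (-x) := exp_le_exp.2 (by linarith)
  have hs₂ : exp (-x) ≤ 1 := exp_le_one_iff.2 (by linarith)
  have hA := exp_neg_sub_one_sub_div_pow_le hn (exp_pos (-D)).le (hs₁.trans hs₂)
  have hB : exp (-s) - gumbelCDF x ≤ (√2 + 1) / exp √2 / b ^ 2 :=
    calc exp (-s) - exp (-exp (-x)) ≤ exp (-x) - s := exp_neg_sub_exp_neg_le (exp_pos _).le hs₁
      _ ≤ exp (-x) - exp (-x) * exp (-δ) := by
          rw [← exp_add]; linarith [exp_le_exp.2 (by linarith : -x + -δ ≤ -D)]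
      _ ≤ exp (-x) * δ := by nlinarith [one_sub_le_exp_neg δ, exp_pos (-x)]
      _ = (x ^ 2 + 2 * x) / 2 * exp (-x) / b ^ 2 := by ring
      _ ≤ (√2 + 1) / exp √2 / b ^ 2 := by gcongr; exact sq_add_two_mul_div_two_mul_exp_neg_le hx
  have h₁ : (1 - s / n) ^ n ≤ exp (-s) := one_sub_div_pow_le_exp_neg (by linarith)
  have h₂ : gumbelCDF x ≤ exp (-s) := exp_le_exp.2 (neg_le_neg hs₁)
  have : 0 ≤ (exp 1 * (n - 1))⁻¹ := inv_nonneg.2 (mul_nonneg (exp_pos 1).le (by linarith))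
  rw [hΦ, abs_sub_le_iff]
  constructor <;> linarith [(by positivity : (0 : ℝ) ≤ (√2 + 1) / exp √2 / b ^ 2)]

lemma inv_exp_one_mul_sub_one_lt_log_div {a b : ℝ} (ha : 1 < a) (hab : a ≤ b) :
    (exp 1 * (b - 1))⁻¹ < log a / (2 * (a - 1)) / log b := by
  have hloga := log_pos ha
  have hlogb := log_pos (ha.trans_le hab)
  have h := monotoneOn_sub_one_div_log ha (ha.trans_le hab) hab
  simp only [div_le_div_iff₀ hloga hlogb] at h
  rw [div_div, inv_eq_one_div, div_lt_div_iff₀ (by nlinarith [exp_pos 1]) (by nlinarith)]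
  nlinarith [exp_one_gt_d9, mul_pos (sub_pos.2 ha) hlogb]

/-- For `n₀ ≥ 3` and `n ≥ n₀`,
`sup_{x ≥ 0} |Φⁿ(x/bₙ + bₙ) − Λ(x)| < C̄⁺(n₀)/log n` with
`C̄⁺(n₀) = ((√2+1)/e^{√2})·(log n₀)/b_{n₀}² + (log n₀)/(2(n₀ − 1))`. -/
theorem sup_nonneg_bound_AH (n₀ n : ℕ) (hn₀ : 3 ≤ n₀) (hn : n₀ ≤ n)
    (b₀ bn : ℝ) (hb₀ : stdNormalCDF b₀ = 1 - 1 / (n₀ : ℝ))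
    (hbn : stdNormalCDF bn = 1 - 1 / (n : ℝ)) :
    (⨆ x : Set.Ici (0 : ℝ),
        |stdNormalCDF ((x : ℝ) / bn + bn) ^ n - gumbelCDF (x : ℝ)|)
      < ((Real.sqrt 2 + 1) / Real.exp (Real.sqrt 2) * (Real.log n₀ / b₀ ^ 2)
          + Real.log n₀ / (2 * ((n₀ : ℝ) - 1)))
        / Real.log n := by
  have hn' : (n₀ : ℝ) ≤ n := by exact_mod_cast hn
  have hn₀' : (3 : ℝ) ≤ n₀ := by exact_mod_cast hn₀
  have hb₀_pos := pos_of_stdNormalCDF_eq (by linarith) hb₀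
  have hbn_pos := pos_of_stdNormalCDF_eq (by linarith) hbn
  have hb₀_le : b₀ ≤ bn := by
    rw [← stdNormalCDF_strictMono.le_iff_le, hb₀, hbn]
    gcongr
  have hratio : b₀ ^ 2 / log n₀ ≤ bn ^ 2 / log n := by
    simpa only [stdNormalCumHazard_of_stdNormalCDF_eq hb₀,
      stdNormalCumHazard_of_stdNormalCDF_eq hbn] using
      monotoneOn_sq_div_stdNormalCumHazard hb₀_pos.le (hb₀_pos.le.trans hb₀_le) hb₀_le
  have hsup := ciSup_le fun x : Ici (0 : ℝ) ↦
    abs_stdNormalCDF_pow_sub_gumbelCDF_le (by omega) hbn_pos hbn x.2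
  have hlog₀ : 0 < log n₀ := log_pos (by linarith)
  have hlog : 0 < log n := log_pos (by linarith)
  have hinv := inv_anti₀ (by positivity) hratio
  rw [inv_div, inv_div] at hinv
  calc _ ≤ (exp 1 * (n - 1))⁻¹ + (√2 + 1) / exp √2 / bn ^ 2 := hsup
    _ < log n₀ / (2 * (n₀ - 1)) / log n + (√2 + 1) / exp √2 * (log n / bn ^ 2) / log n := by
        refine add_lt_add_of_lt_of_le (inv_exp_one_mul_sub_one_lt_log_div (by linarith) hn') ?_
        exact le_of_eq (by field_simp)
    _ ≤ log n₀ / (2 * (n₀ - 1)) / log n + (√2 + 1) / exp √2 * (log n₀ / b₀ ^ 2) / log n := by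
        gcongr
    _ = _ := by ring
end

section
/- As n → ∞, b_n − b_n* = O(1/(log n)^{3/2}). -/
/-!
Write `G x = ∫_x^∞ e^{-t²/2} dt` and `h x = x⁻¹ e^{-x²/2}`, so that `G bₙ = √(2π)/n = h bₙ*`.
Integrating `t e^{-t²/2}` and `(1 - 3/t⁴) e^{-t²/2}` exactly gives the Mills-ratio bounds
`(x⁻¹ - x⁻³) e^{-x²/2} ≤ G x ≤ h x`. Since `h` is decreasing, the upper bound gives `bₙ ≤ bₙ*`,
and since `h (x + 2/x³) ≤ (x⁻¹ - x⁻³) e^{-x²/2}` for `x ≥ 2`, the lower bound gives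
`bₙ* ≤ bₙ + 2/bₙ³`. Finally `e^{-x²} ≤ G x` yields `log n ≤ 2 bₙ²`, so `2/bₙ³ = O((log n)^{-3/2})`.
-/

open Real Filter Asymptotics

open MeasureTheory Set Topology

lemma integrable_exp_neg_sq_div_two : Integrable fun t : ℝ => exp (-t ^ 2 / 2) := by
  simpa [neg_div, div_eq_inv_mul] using integrable_exp_neg_mul_sq (b := 1 / 2) (by norm_num)

lemma integral_exp_neg_sq_div_two : ∫ t : ℝ, exp (-t ^ 2 / 2) = √(2 * π) := by
  simpa [neg_div, div_eq_inv_mul, mul_comm] using integral_gaussian (1 / 2)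

lemma integrable_mul_exp_neg_sq_div_two : Integrable fun t : ℝ => t * exp (-t ^ 2 / 2) := by
  simpa [neg_div, div_eq_inv_mul] using integrable_mul_exp_neg_mul_sq (b := 1 / 2) (by norm_num)

lemma hasDerivAt_exp_neg_sq_div_two (t : ℝ) :
    HasDerivAt (fun t : ℝ => exp (-t ^ 2 / 2)) (-t * exp (-t ^ 2 / 2)) t := by
  have h : HasDerivAt (fun t : ℝ => -t ^ 2 / 2) (-t) t :=
    ((hasDerivAt_pow 2 t).fun_neg.div_const 2).congr_deriv (by push_cast; ring)
  simpa [mul_comm] using h.exp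

lemma tendsto_exp_neg_sq_div_two : Tendsto (fun t : ℝ => exp (-t ^ 2 / 2)) atTop (𝓝 0) :=
  tendsto_exp_atBot.comp <| (tendsto_neg_atTop_atBot.comp
    (tendsto_pow_atTop two_ne_zero)).atBot_div_const two_pos

noncomputable def gaussianTail (x : ℝ) : ℝ := ∫ t in Ioi x, exp (-t ^ 2 / 2)

lemma stdNormalCDF_eq (x : ℝ) :
    stdNormalCDF x = 1 - (√(2 * π))⁻¹ * gaussianTail x := by
  have hsplit := intervalIntegral.integral_Iic_add_Ioi (b := x)
    integrable_exp_neg_sq_div_two.integrableOn integrable_exp_neg_sq_div_two.integrableOn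
  rw [integral_exp_neg_sq_div_two, ← eq_sub_iff_add_eq] at hsplit
  have : √(2 * π) ≠ 0 := by positivity
  rw [stdNormalCDF, gaussianTail, hsplit]
  field_simp

lemma gaussianTail_eq_of_stdNormalCDF_eq {x n : ℝ} (h : stdNormalCDF x = 1 - 1 / n) :
    gaussianTail x = √(2 * π) / n := by
  rw [stdNormalCDF_eq, sub_right_inj] at h
  rw [div_eq_mul_one_div, ← h, mul_inv_cancel_left₀ (by positivity)]

lemma gaussianTail_antitone : Antitone gaussianTail := fun _ _ hxy =>
  setIntegral_mono_set integrable_exp_neg_sq_div_two.integrableOn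
    (Eventually.of_forall fun _ => (exp_pos _).le) (Ioi_subset_Ioi hxy).eventuallyLE

lemma integral_Ioi_mul_exp_neg_sq_div_two (x : ℝ) :
    ∫ t in Ioi x, t * exp (-t ^ 2 / 2) = exp (-x ^ 2 / 2) := by
  have hderiv (t : ℝ) : HasDerivAt (fun t => -exp (-t ^ 2 / 2)) (t * exp (-t ^ 2 / 2)) t := by
    simpa using (hasDerivAt_exp_neg_sq_div_two t).fun_neg
  rw [integral_Ioi_of_hasDerivAt_of_tendsto' (fun t _ => hderiv t)
    integrable_mul_exp_neg_sq_div_two.integrableOn (by simpa using tendsto_exp_neg_sq_div_two.neg)]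
  ring

lemma gaussianTail_le {x : ℝ} (hx : 0 < x) : gaussianTail x ≤ x⁻¹ * exp (-x ^ 2 / 2) := by
  calc gaussianTail x ≤ ∫ t in Ioi x, x⁻¹ * (t * exp (-t ^ 2 / 2)) := by
        refine setIntegral_mono_on integrable_exp_neg_sq_div_two.integrableOn
          (integrable_mul_exp_neg_sq_div_two.const_mul _).integrableOn measurableSet_Ioi
          fun t (ht : x < t) => ?_
        rw [← mul_assoc]
        exact le_mul_of_one_le_left (exp_pos _).le ((one_le_inv_mul₀ hx).2 ht.le)
    _ = x⁻¹ * exp (-x ^ 2 / 2) := by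
        rw [integral_const_mul, integral_Ioi_mul_exp_neg_sq_div_two]

lemma le_gaussianTail {x : ℝ} (hx : 0 < x) :
    (x⁻¹ - (x ^ 3)⁻¹) * exp (-x ^ 2 / 2) ≤ gaussianTail x := by
  set f : ℝ → ℝ := fun t => (1 - 3 * (t ^ 4)⁻¹) * exp (-t ^ 2 / 2)
  have hderiv : ∀ t ∈ Ici x,
      HasDerivAt (fun t => ((t ^ 3)⁻¹ - t⁻¹) * exp (-t ^ 2 / 2)) (f t) t := by
    intro t (ht : x ≤ t)
    have ht0 : t ≠ 0 := (hx.trans_le ht).ne'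
    refine ((((hasDerivAt_pow 3 t).fun_inv (pow_ne_zero 3 ht0)).fun_sub
      (hasDerivAt_inv ht0)).fun_mul (hasDerivAt_exp_neg_sq_div_two t)).congr_deriv ?_
    simp only [f]
    field_simp
    ring
  have hf : IntegrableOn f (Ioi x) := by
    refine ((integrable_exp_neg_sq_div_two.const_mul (1 + 3 * (x ^ 4)⁻¹)).integrableOn).mono'
      (by fun_prop) ?_
    filter_upwards [ae_restrict_mem measurableSet_Ioi] with t (ht : x < t)
    have h4 : (t ^ 4)⁻¹ ≤ (x ^ 4)⁻¹ := inv_anti₀ (by positivity) (by gcongr)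
    have h4' : 0 < (t ^ 4)⁻¹ := by have := hx.trans ht; positivity
    rw [Real.norm_eq_abs, abs_mul, abs_of_pos (exp_pos _)]
    gcongr
    rw [abs_le]
    constructor <;> linarith
  have htend : Tendsto (fun t => ((t ^ 3)⁻¹ - t⁻¹) * exp (-t ^ 2 / 2)) atTop (𝓝 0) := by
    simpa using ((tendsto_inv_atTop_zero.comp (tendsto_pow_atTop three_ne_zero)).sub
      tendsto_inv_atTop_zero).mul tendsto_exp_neg_sq_div_two
  calc (x⁻¹ - (x ^ 3)⁻¹) * exp (-x ^ 2 / 2) = ∫ t in Ioi x, f t := by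
        rw [integral_Ioi_of_hasDerivAt_of_tendsto' hderiv hf htend]
        ring
    _ ≤ gaussianTail x := by
        refine setIntegral_mono_on hf integrable_exp_neg_sq_div_two.integrableOn measurableSet_Ioi
          fun t (ht : x < t) => ?_
        have : 0 < (t ^ 4)⁻¹ := by have := hx.trans ht; positivity
        nlinarith [exp_pos (-t ^ 2 / 2)]

lemma exp_neg_sq_le_gaussianTail {x : ℝ} (hx : 2 ≤ x) : exp (-x ^ 2) ≤ gaussianTail x := by
  have hx0 : 0 < x := by linarith
  have hexp : exp (-x ^ 2 / 2) * (1 + x ^ 2 / 2) ≤ 1 := by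
    calc exp (-x ^ 2 / 2) * (1 + x ^ 2 / 2) ≤ exp (-x ^ 2 / 2) * exp (x ^ 2 / 2) := by
          gcongr; linarith [add_one_le_exp (x ^ 2 / 2)]
      _ = 1 := by rw [← exp_add]; ring_nf; exact exp_zero
  have hpoly : exp (-x ^ 2 / 2) ≤ x⁻¹ - (x ^ 3)⁻¹ := by
    rw [show x⁻¹ - (x ^ 3)⁻¹ = (x ^ 2 - 1) / x ^ 3 by field_simp, le_div_iff₀ (by positivity)]
    nlinarith [exp_pos (-x ^ 2 / 2), mul_le_mul_of_nonneg_left hx (sq_nonneg x)]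
  calc exp (-x ^ 2) = exp (-x ^ 2 / 2) * exp (-x ^ 2 / 2) := by rw [← exp_add]; ring_nf
    _ ≤ (x⁻¹ - (x ^ 3)⁻¹) * exp (-x ^ 2 / 2) := by gcongr
    _ ≤ gaussianTail x := le_gaussianTail hx0

lemma gaussianTail_pos (x : ℝ) : 0 < gaussianTail x :=
  calc 0 < exp (-(max x 2) ^ 2) := exp_pos _
    _ ≤ gaussianTail (max x 2) := exp_neg_sq_le_gaussianTail (le_max_right x 2)
    _ ≤ gaussianTail x := gaussianTail_antitone (le_max_left x 2)

lemma tendsto_atTop_of_tendsto_gaussianTail {ι : Type*} {l : Filter ι} {u : ι → ℝ}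
    (h : Tendsto (fun i => gaussianTail (u i)) l (𝓝 0)) : Tendsto u l atTop := by
  refine tendsto_atTop.2 fun a => ?_
  filter_upwards [h.eventually (gt_mem_nhds (gaussianTail_pos a))] with i hi
  by_contra! hua
  exact (gaussianTail_antitone hua.le).not_gt hi

lemma strictAntiOn_inv_mul_exp_neg_sq_div_two :
    StrictAntiOn (fun x : ℝ => x⁻¹ * exp (-x ^ 2 / 2)) (Ioi 0) := by
  intro x (hx : 0 < x) y (hy : 0 < y) hxy
  have : exp (-y ^ 2 / 2) < exp (-x ^ 2 / 2) := exp_lt_exp.2 (by nlinarith)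
  have : y⁻¹ < x⁻¹ := inv_strictAnti₀ hx hxy
  dsimp only
  gcongr

lemma inv_mul_exp_neg_sq_div_two_add_le {x : ℝ} (hx : 2 ≤ x) :
    (x + 2 / x ^ 3)⁻¹ * exp (-(x + 2 / x ^ 3) ^ 2 / 2) ≤ (x⁻¹ - (x ^ 3)⁻¹) * exp (-x ^ 2 / 2) := by
  have hx0 : 0 < x := by linarith
  set u := (x ^ 2)⁻¹ with hu
  have hu0 : 0 < u := by positivity
  have hu4 : u ≤ 1 / 4 := by
    rw [hu, inv_le_comm₀ (by positivity) (by norm_num)]; nlinarith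
  have hsq : -(x + 2 / x ^ 3) ^ 2 / 2 ≤ -x ^ 2 / 2 + -(2 * u) := by
    have : x * (2 / x ^ 3) = 2 * u := by rw [hu]; field_simp
    nlinarith [sq_nonneg (2 / x ^ 3)]
  -- `exp (-2u) ≤ 1/(1 + 2u) ≤ 1 - u` as long as `u ≤ 1/2`
  have hexp : exp (-(2 * u)) ≤ 1 - u := by
    rw [exp_neg, inv_le_iff_one_le_mul₀' (exp_pos _)]
    nlinarith [add_one_le_exp (2 * u)]
  calc (x + 2 / x ^ 3)⁻¹ * exp (-(x + 2 / x ^ 3) ^ 2 / 2)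
      ≤ x⁻¹ * (exp (-x ^ 2 / 2) * exp (-(2 * u))) := by
        rw [← exp_add]
        gcongr
        linarith [show 0 < 2 / x ^ 3 by positivity]
    _ ≤ x⁻¹ * (exp (-x ^ 2 / 2) * (1 - u)) := by gcongr
    _ = (x⁻¹ - (x ^ 3)⁻¹) * exp (-x ^ 2 / 2) := by rw [hu]; field_simp

lemma le_and_le_add_of_gaussianTail_eq {x y : ℝ} (hx : 2 ≤ x) (hy : 0 < y)
    (h : gaussianTail x = y⁻¹ * exp (-y ^ 2 / 2)) : x ≤ y ∧ y ≤ x + 2 / x ^ 3 := by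
  have hx0 : 0 < x := by linarith
  have hanti := strictAntiOn_inv_mul_exp_neg_sq_div_two
  constructor
  · by_contra! hyx
    have := hanti hy hx0 hyx
    linarith [gaussianTail_le hx0]
  · by_contra! hxy
    have := hanti (show 0 < x + 2 / x ^ 3 by positivity) hy hxy
    linarith [le_gaussianTail hx0, inv_mul_exp_neg_sq_div_two_add_le hx]

lemma log_le_two_mul_sq_of_gaussianTail_le {x n : ℝ} (hx : 2 ≤ x) (hn : 0 < n)
    (h : gaussianTail x ≤ √(2 * π) / n) : log n ≤ 2 * x ^ 2 := by
  have hc : √(2 * π) ≤ exp (x ^ 2) := by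
    refine Real.sqrt_le_iff.2 ⟨(exp_pos _).le, ?_⟩
    nlinarith [pi_le_four, add_one_le_exp (x ^ 2), exp_pos (x ^ 2)]
  have hn' : n ≤ exp (2 * x ^ 2) := by
    have := (exp_neg_sq_le_gaussianTail hx).trans h
    rw [le_div_iff₀ hn, exp_neg, inv_mul_le_iff₀ (exp_pos _)] at this
    calc n ≤ exp (x ^ 2) * √(2 * π) := this
      _ ≤ exp (x ^ 2) * exp (x ^ 2) := by gcongr
      _ = exp (2 * x ^ 2) := by rw [← exp_add]; ring_nf
  exact (log_le_iff_le_exp hn).2 hn'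

lemma inv_pow_three_le_of_le_two_mul_sq {x L : ℝ} (hx : 0 < x) (hL : 0 < L)
    (h : L ≤ 2 * x ^ 2) :
    (x ^ 3)⁻¹ ≤ 2 ^ (3 / 2 : ℝ) * (1 / L ^ (3 / 2 : ℝ)) := by
  have hx3 : (2 * x ^ 2) ^ (3 / 2 : ℝ) = 2 ^ (3 / 2 : ℝ) * x ^ 3 := by
    rw [mul_rpow (by norm_num) (by positivity), ← rpow_natCast_mul hx.le]
    norm_num
  have := rpow_le_rpow hL.le h (by norm_num : (0 : ℝ) ≤ 3 / 2)
  rw [hx3] at this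
  rw [mul_one_div, le_div_iff₀ (by positivity)]
  calc (x ^ 3)⁻¹ * L ^ (3 / 2 : ℝ) ≤ (x ^ 3)⁻¹ * (2 ^ (3 / 2 : ℝ) * x ^ 3) := by gcongr
    _ = 2 ^ (3 / 2 : ℝ) := by field_simp

/-- `bₙ − bₙ* = O(1/(log n)^{3/2})` as `n → ∞`. -/
theorem bn_sub_bnstar (b bs : ℕ → ℝ)
    (hb : ∀ n : ℕ, 2 ≤ n → stdNormalCDF (b n) = 1 - 1 / (n : ℝ))
    (hbs : ∀ n : ℕ, 2 ≤ n → 0 < bs n ∧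
      (Real.sqrt (2 * Real.pi))⁻¹ * (bs n)⁻¹ * Real.exp (-(bs n) ^ 2 / 2) = 1 / (n : ℝ)) :
    (fun n : ℕ => b n - bs n) =O[atTop]
      (fun n : ℕ => 1 / (Real.log n) ^ ((3 : ℝ) / 2)) := by
  have htail (n : ℕ) (hn : 2 ≤ n) : gaussianTail (b n) = √(2 * π) / n :=
    gaussianTail_eq_of_stdNormalCDF_eq (hb n hn)
  have hmills (n : ℕ) (hn : 2 ≤ n) : gaussianTail (b n) = (bs n)⁻¹ * exp (-bs n ^ 2 / 2) := by
    rw [htail n hn, div_eq_mul_one_div, ← (hbs n hn).2]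
    field_simp
  have hb2 : ∀ᶠ n in atTop, 2 ≤ b n :=
    (tendsto_atTop_of_tendsto_gaussianTail ((tendsto_const_div_atTop_nhds_zero_nat _).congr'
      (eventually_atTop.2 ⟨2, fun n hn => (htail n hn).symm⟩))).eventually_ge_atTop 2
  have hdiff : (fun n => b n - bs n) =O[atTop] fun n => (b n ^ 3)⁻¹ := by
    refine IsBigO.of_bound 2 ?_
    filter_upwards [hb2, eventually_ge_atTop 2] with n hbn hn
    obtain ⟨hlo, hhi⟩ := le_and_le_add_of_gaussianTail_eq hbn (hbs n hn).1 (hmills n hn)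
    rw [norm_eq_abs, norm_eq_abs, abs_sub_comm, abs_of_nonneg (sub_nonneg.2 hlo),
      abs_of_pos (by positivity), ← div_eq_mul_inv]
    linarith
  have hlog : (fun n => (b n ^ 3)⁻¹) =O[atTop] fun n : ℕ => 1 / log n ^ (3 / 2 : ℝ) := by
    refine IsBigO.of_bound (2 ^ (3 / 2 : ℝ)) ?_
    filter_upwards [hb2, eventually_ge_atTop 2] with n hbn hn
    have hL : 0 < log n := log_pos (by exact_mod_cast hn)
    rw [norm_of_nonneg (by positivity), norm_of_nonneg (by positivity)]
    exact inv_pow_three_le_of_le_two_mul_sq (by linarith) hL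
      (log_le_two_mul_sq_of_gaussianTail_le hbn (by positivity) (htail n hn).le)
  exact hdiff.trans hlog
end
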